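/- arXiv:2311.01263 — 3 statements merged into one kernel-verified Lean document; each statement's English description precedes it below -/
import Mathlib

section
/- Let n, m, k be natural numbers with 0 < k ≤ m ≤ n. Let s : Fin n → ℝ be a nonincreasing sequence (the sparse scores, sorted in decreasing order), let d : Fin n → ℝ (the dense scores), let s_D ∈ ℝ satisfy d i ≤ s_D for every i, and let α ∈ [0,1]. Define the interpolated scores φ i = α · s i + (1 − α) · d i. Suppose that for some index m with k ≤ m < n one has α · s m + (1 − α) · s_D ≤ t, where t is the k-th largest value of φ among the indices i < m. Then the multiset of the k largest values of φ over all indices i < n is equal to the multiset of the k largest values of φ over the indices i < m; i.e., stopping the scan at position m (early stopping with the true maximum s_D of the dense scores) returns the actual top-k interpolated scores. -/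
/-! Adding to a multiset values that are dominated by all of its top `k` leaves the top `k`
unchanged: if the sorted multiset is `L₁ ++ L₂` with `L₂` the top `k`, then merging the new
values into `L₁` still gives a sorted list, whose last `k` entries are `L₂`. The theorem
follows because every unscanned document has interpolated score at most
`α · s m + (1 - α) · s_D`. -/

open Finset

/-- The multiset of the `k` largest values of a real-valued multiset (counted with
multiplicity): sort in nondecreasing order and drop all but the last `k` entries. -/
noncomputable def topk (k : ℕ) (M : Multiset ℝ) : Multiset ℝ :=
  ((M.sort (· ≤ ·)).drop (Multiset.card M - k) : List ℝ)

theorem topk_eq_drop_of_pairwise (k : ℕ) {M : Multiset ℝ} {L : List ℝ}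
    (hL : L.Pairwise (· ≤ ·)) (hLM : (L : Multiset ℝ) = M) :
    topk k M = (L.drop (L.length - k) : List ℝ) := by
  have hsort : M.sort (· ≤ ·) = L :=
    List.Perm.eq_of_pairwise' (Multiset.pairwise_sort _ _) hL
      (by rw [← Multiset.coe_eq_coe, Multiset.sort_eq, hLM])
  rw [topk, hsort, ← hLM, Multiset.coe_card]

theorem topk_add_of_forall_le (k : ℕ) {A B : Multiset ℝ} (hk : k ≤ Multiset.card A)
    (hB : ∀ b ∈ B, ∀ x ∈ topk k A, b ≤ x) :
    topk k (A + B) = topk k A := by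
  set L := A.sort (· ≤ ·)
  set LB := B.sort (· ≤ ·)
  set L₁ := L.take (L.length - k)
  set L₂ := L.drop (L.length - k)
  have hLA : (L : Multiset ℝ) = A := Multiset.sort_eq _ _
  have hL₂ : topk k A = L₂ := topk_eq_drop_of_pairwise k (Multiset.pairwise_sort _ _) hLA
  obtain ⟨hL₁_sorted, hL₂_sorted, hL₁_le_L₂⟩ : L₁.Pairwise (· ≤ ·) ∧ L₂.Pairwise (· ≤ ·) ∧
      ∀ a ∈ L₁, ∀ b ∈ L₂, a ≤ b := by
    rw [← List.pairwise_append, List.take_append_drop]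
    exact Multiset.pairwise_sort _ _
  have hmerge := List.merge_perm_append (le := fun a b => decide (a ≤ b)) (xs := L₁) (ys := LB)
  have hsorted : (L₁.merge LB (· ≤ ·) ++ L₂).Pairwise (· ≤ ·) := by
    refine List.pairwise_append.mpr
      ⟨hL₁_sorted.merge (Multiset.pairwise_sort _ _), hL₂_sorted, fun a ha b hb => ?_⟩
    rcases List.mem_append.mp (hmerge.mem_iff.mp ha) with ha | ha
    · exact hL₁_le_L₂ a ha b hb
    · exact hB a ((Multiset.mem_sort _).mp ha) b (by rw [hL₂]; exact Multiset.mem_coe.mpr hb)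
  have hsum : ((L₁.merge LB (· ≤ ·) ++ L₂ : List ℝ) : Multiset ℝ) = A + B := by
    rw [← Multiset.coe_add, Multiset.coe_eq_coe.mpr hmerge, ← Multiset.coe_add,
      add_right_comm, Multiset.coe_add, List.take_append_drop, hLA, Multiset.sort_eq]
  have hlen : (L₁.merge LB (· ≤ ·)).length = (L₁.merge LB (· ≤ ·) ++ L₂).length - k := by
    have : L.length = Multiset.card A := Multiset.length_sort _
    simp only [List.length_append, List.length_merge, L₁, L₂, List.length_take,
      List.length_drop]
    omega
  rw [topk_eq_drop_of_pairwise k hsorted hsum, hL₂, ← hlen, List.drop_left]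

theorem univ_val_map_eq_filter_add_filter_not {ι β : Type*} [Fintype ι] (p : ι → Prop)
    [DecidablePred p] (f : ι → β) :
    (univ : Finset ι).val.map f =
      (univ.filter p).val.map f + (univ.filter fun i => ¬ p i).val.map f := by
  rw [filter_val, filter_val, ← Multiset.map_add, Multiset.filter_add_not]

theorem early_stopping_topk_general
    (n m k : ℕ) (hkm : k ≤ m) (hmn : m < n)
    (s d : Fin n → ℝ) (hs : Antitone s)
    (s_D : ℝ) (hd : ∀ i, d i ≤ s_D)
    (α : ℝ) (hα0 : 0 ≤ α) (hα1 : α ≤ 1)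
    (φ : Fin n → ℝ) (hφ : ∀ i, φ i = α * s i + (1 - α) * d i)
    (t : ℝ)
    (ht_min : ∀ x ∈ topk k (((Finset.univ.filter fun i : Fin n => (i : ℕ) < m)).val.map φ),
      t ≤ x)
    (hstop : α * s ⟨m, hmn⟩ + (1 - α) * s_D ≤ t) :
    topk k ((Finset.univ : Finset (Fin n)).val.map φ) =
      topk k (((Finset.univ.filter fun i : Fin n => (i : ℕ) < m)).val.map φ) := by
  rw [univ_val_map_eq_filter_add_filter_not fun i : Fin n => (i : ℕ) < m]
  apply topk_add_of_forall_le
  · rw [Multiset.card_map, ← card_def, Fin.card_filter_val_lt]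
    omega
  · intro b hb x hx
    obtain ⟨i, hi, rfl⟩ := Multiset.mem_map.mp hb
    have him : (⟨m, hmn⟩ : Fin n) ≤ i := by
      simpa [Fin.le_def] using (mem_filter.mp (mem_val.mp hi)).2
    calc φ i ≤ α * s ⟨m, hmn⟩ + (1 - α) * s_D := by
          rw [hφ]
          exact add_le_add (mul_le_mul_of_nonneg_left (hs him) hα0)
            (mul_le_mul_of_nonneg_left (hd i) (sub_nonneg.mpr hα1))
      _ ≤ t := hstop
      _ ≤ x := ht_min x hx

/-- Early stopping with the true maximum `s_D` of the dense scores returns the actual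
top-`k` interpolated scores: if the best possible interpolated score of the next
(unseen) document does not exceed the `k`-th largest interpolated score `t` seen so
far, then the top-`k` scores among the first `m` documents equal the top-`k` scores
among all `n` documents. -/
theorem early_stopping_topk
    (n m k : ℕ) (hk : 0 < k) (hkm : k ≤ m) (hmn : m < n)
    (s d : Fin n → ℝ) (hs : Antitone s)
    (s_D : ℝ) (hd : ∀ i, d i ≤ s_D)
    (α : ℝ) (hα0 : 0 ≤ α) (hα1 : α ≤ 1)
    (φ : Fin n → ℝ) (hφ : ∀ i, φ i = α * s i + (1 - α) * d i)
    (t : ℝ)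
    (ht_mem : t ∈ topk k (((Finset.univ.filter fun i : Fin n => (i : ℕ) < m)).val.map φ))
    (ht_min : ∀ x ∈ topk k (((Finset.univ.filter fun i : Fin n => (i : ℕ) < m)).val.map φ),
      t ≤ x)
    (hstop : α * s ⟨m, hmn⟩ + (1 - α) * s_D ≤ t) :
    topk k ((Finset.univ : Finset (Fin n)).val.map φ) =
      topk k (((Finset.univ.filter fun i : Fin n => (i : ℕ) < m)).val.map φ) :=
  early_stopping_topk_general n m k hkm hmn s d hs s_D hd α hα0 hα1 φ hφ t ht_min hstop
end

section
/- Let x_1, x_2, ..., x_n be a real-valued independent and identically distributed random sample drawn from a distribution with cumulative distribution function F, and let z = max(x_1, x_2, ..., x_n) be the sample maximum. Then for every ε ≥ √( (1/(2n)) · ln 2 ), one has Pr( F(z) < 1 − ε ) ≤ exp(−2 n ε²); that is, the probability that the CDF evaluated at the sample maximum falls below 1 − ε is exponentially small in the sample size. -/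
open MeasureTheory ProbabilityTheory Real

lemma one_sub_le_exp_neg_two_sq {ε : ℝ} (h0 : 0 < ε) (h1 : ε < 1) :
    1 - ε ≤ Real.exp (-2 * ε ^ 2) := by
  set s := Real.sqrt (Real.sqrt (1 - ε)) with hs
  have h1e : (0:ℝ) < 1 - ε := by linarith
  have hs0 : 0 < s := Real.sqrt_pos.2 (Real.sqrt_pos.2 h1e)
  have hs2 : s ^ 2 = Real.sqrt (1 - ε) := Real.sq_sqrt (Real.sqrt_nonneg _)
  have hs4 : s ^ 4 = 1 - ε := by
    have h2 := Real.sq_sqrt h1e.le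
    calc s ^ 4 = (s ^ 2) ^ 2 := by ring
      _ = 1 - ε := by rw [hs2, h2]
  have hs1 : s ≤ 1 := by
    by_contra h
    push_neg at h
    have : (1:ℝ) < s ^ 4 := one_lt_pow₀ h (by norm_num)
    linarith
  have hlog : Real.log (1 - ε) ≤ 4 * (s - 1) := by
    have heq : Real.log (1 - ε) = 4 * Real.log s := by
      rw [← hs4, Real.log_pow]; push_cast; ring
    rw [heq]
    have := Real.log_le_sub_one_of_pos hs0
    linarith
  have hpoly : s + s^2 + s^3 ≤ 1 + s^4 + s^5 + s^6 + s^7 := by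
    nlinarith [sq_nonneg (s^2+s-1), sq_nonneg (s^3+s^2+s-1), mul_nonneg hs0.le hs0.le,
      mul_nonneg (mul_nonneg hs0.le hs0.le) hs0.le, sq_nonneg (1-s),
      mul_nonneg (sub_nonneg.2 hs1) (sq_nonneg (s^2+s-1)),
      mul_nonneg hs0.le (sq_nonneg (s^2+s-1)),
      mul_nonneg (mul_nonneg hs0.le hs0.le) (sq_nonneg (s^2+s-1)),
      mul_nonneg hs0.le (sq_nonneg (s^3+s^2+s-1))]
  have hkey : Real.log (1 - ε) ≤ -2 * ε ^ 2 := by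
    have hε4 : ε = 1 - s ^ 4 := by linarith [hs4]
    have : (1 - s ^ 4) ^ 2 ≤ 2 * (1 - s) := by nlinarith [hpoly]
    nlinarith [hlog, this]
  calc 1 - ε = Real.exp (Real.log (1 - ε)) := (Real.exp_log h1e).symm
    _ ≤ _ := Real.exp_le_exp.2 hkey

/-- For an i.i.d. real-valued sample `X 0, …, X (n-1)` with common CDF `F` and sample
maximum `z`, for every `ε ≥ √((1/(2n)) · ln 2)` we have
`Pr(F(z) < 1 − ε) ≤ exp(−2nε²)`. -/
theorem cdf_of_sample_max
    {Ω : Type*} [MeasurableSpace Ω] (μ : Measure Ω) [IsProbabilityMeasure μ]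
    (n : ℕ) (hn : 0 < n) (X : Fin n → Ω → ℝ)
    (hmeas : ∀ i, Measurable (X i))
    (hindep : iIndepFun X μ)
    (hident : ∀ i, IdentDistrib (X i) (X ⟨0, hn⟩) μ μ)
    (F : ℝ → ℝ) (hF : ∀ i x, F x = (μ {ω | X i ω ≤ x}).toReal)
    (z : Ω → ℝ) (hz : ∀ ω, IsGreatest (Set.range fun i => X i ω) (z ω))
    (ε : ℝ) (hε : Real.sqrt ((1 / (2 * n)) * Real.log 2) ≤ ε) :
    (μ {ω | F (z ω) < 1 - ε}).toReal ≤ Real.exp (-2 * n * ε ^ 2) := by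
  have hexp_pos : 0 < Real.exp (-2 * n * ε ^ 2) := Real.exp_pos _
  -- ε is positive
  have hn' : (0:ℝ) < n := by exact_mod_cast hn
  have hε0 : 0 < ε := by
    refine lt_of_lt_of_le (Real.sqrt_pos.2 ?_) hε
    have : (0:ℝ) < Real.log 2 := Real.log_pos one_lt_two
    positivity
  rcases le_or_gt 1 ε with h1 | h1
  · -- trivial case: the event is empty
    have hempty : {ω | F (z ω) < 1 - ε} = ∅ := by
      ext ω
      simp only [Set.mem_setOf_eq, Set.mem_empty_iff_false, iff_false, not_lt]
      have : 0 ≤ F (z ω) := by rw [hF ⟨0, hn⟩]; exact ENNReal.toReal_nonneg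
      linarith
    rw [hempty]
    simp only [measure_empty, ENNReal.toReal_zero]
    positivity
  · -- main case: 0 < ε < 1
    set X0 := X ⟨0, hn⟩ with hX0
    set t := 1 - ε with ht
    have ht0 : 0 < t := by simp [ht]; linarith
    have ht1 : t < 1 := by simp [ht]; linarith
    have hFmono : Monotone F := by
      intro a b hab
      rw [hF ⟨0, hn⟩ a, hF ⟨0, hn⟩ b]
      exact ENNReal.toReal_mono (measure_ne_top μ _)
        (measure_mono fun ω h => le_trans h hab)
    set A := {x : ℝ | F x < t} with hA
    have hAmeas : MeasurableSet A := hFmono.measurable measurableSet_Iio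
    have hofReal : ∀ x, μ {ω | X0 ω ≤ x} = ENNReal.ofReal (F x) := by
      intro x
      rw [hF ⟨0, hn⟩ x, ENNReal.ofReal_toReal (measure_ne_top μ _)]
    have hlow : ∀ {a b : ℝ}, b ≤ a → a ∈ A → b ∈ A :=
      fun h ha => lt_of_le_of_lt (hFmono h) ha
    -- key single-sample bound
    have hp : μ (X0 ⁻¹' A) ≤ ENNReal.ofReal t := by
      rcases Set.eq_empty_or_nonempty A with hAe | hAne
      · simp [hAe]
      · -- find k with t ≤ F k
        have hU : (⋃ k : ℕ, {ω | X0 ω ≤ (k:ℝ)}) = Set.univ := by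
          ext ω
          simp only [Set.mem_iUnion, Set.mem_setOf_eq, Set.mem_univ, iff_true]
          obtain ⟨k, hk⟩ := exists_nat_ge (X0 ω)
          exact ⟨k, hk⟩
        have hmono0 : Monotone (fun k : ℕ => {ω | X0 ω ≤ (k:ℝ)}) := by
          intro a b hab ω h
          simp only [Set.mem_setOf_eq] at *
          exact le_trans h (by exact_mod_cast hab)
        have htend : Filter.Tendsto (fun k : ℕ => μ {ω | X0 ω ≤ (k:ℝ)})
            Filter.atTop (nhds 1) := by
          have := tendsto_measure_iUnion_atTop (μ := μ) hmono0
          rwa [hU, measure_univ] at this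
        have htendR : Filter.Tendsto (fun k : ℕ => F (k:ℝ)) Filter.atTop (nhds 1) := by
          have h2 : Filter.Tendsto (fun k : ℕ => (μ {ω | X0 ω ≤ (k:ℝ)}).toReal)
              Filter.atTop (nhds (ENNReal.toReal 1)) :=
            ((ENNReal.tendsto_toReal (by norm_num)).comp htend)
          simp only [ENNReal.toReal_one] at h2
          refine h2.congr fun k => ?_
          rw [hF ⟨0, hn⟩]
        obtain ⟨k, hk⟩ := (htendR.eventually (eventually_ge_nhds ht1)).exists
        have hbdd : BddAbove A := by
          refine ⟨k, fun x hx => ?_⟩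
          by_contra h
          push_neg at h
          exact absurd (lt_of_le_of_lt (le_trans hk (hFmono h.le)) hx) (lt_irrefl _)
        set x₀ := sSup A with hx₀def
        by_cases hx₀ : x₀ ∈ A
        · have hsub : X0 ⁻¹' A ⊆ {ω | X0 ω ≤ x₀} := fun ω h => le_csSup hbdd h
          calc μ (X0 ⁻¹' A) ≤ μ {ω | X0 ω ≤ x₀} := measure_mono hsub
            _ = ENNReal.ofReal (F x₀) := hofReal x₀
            _ ≤ ENNReal.ofReal t := ENNReal.ofReal_le_ofReal hx₀.le
        · have hsub : X0 ⁻¹' A ⊆ ⋃ k : ℕ, {ω | X0 ω ≤ x₀ - 1/(k+1)} := by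
            intro ω h
            have hlt : X0 ω < x₀ := by
              refine lt_of_le_of_ne (le_csSup hbdd h) ?_
              intro heq
              exact hx₀ (heq ▸ h)
            obtain ⟨m, hm⟩ := exists_nat_one_div_lt (sub_pos.2 hlt)
            exact Set.mem_iUnion.2 ⟨m, by simp only [Set.mem_setOf_eq]; linarith⟩
          have hmono1 : Monotone (fun k : ℕ => {ω | X0 ω ≤ x₀ - 1/(k+1)}) := by
            intro a b hab ω h
            simp only [Set.mem_setOf_eq] at *
            have hab' : (a:ℝ) + 1 ≤ (b:ℝ) + 1 := by
              have : (a:ℝ) ≤ b := by exact_mod_cast hab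
              linarith
            have : (1:ℝ)/(b+1) ≤ 1/(a+1) := by
              apply one_div_le_one_div_of_le
              · positivity
              · exact hab'
            linarith
          calc μ (X0 ⁻¹' A) ≤ μ (⋃ k : ℕ, {ω | X0 ω ≤ x₀ - 1/(k+1)}) :=
                measure_mono hsub
            _ = ⨆ k : ℕ, μ {ω | X0 ω ≤ x₀ - 1/(k+1)} :=
                hmono1.directed_le.measure_iUnion
            _ ≤ ENNReal.ofReal t := by
                refine iSup_le fun m => ?_
                rw [hofReal]
                refine ENNReal.ofReal_le_ofReal ?_
                have hlt : x₀ - 1/(m+1) < x₀ := by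
                  have : (0:ℝ) < 1/((m:ℝ)+1) := by positivity
                  linarith
                obtain ⟨a, ha, hgt⟩ := exists_lt_of_lt_csSup hAne hlt
                exact (hlow hgt.le ha).le
    -- event inclusion
    have hXle : ∀ i ω, X i ω ≤ z ω := fun i ω => (hz ω).2 ⟨i, rfl⟩
    have hsubE : {ω | F (z ω) < 1 - ε} ⊆ ⋂ i, X i ⁻¹' A := by
      intro ω h
      exact Set.mem_iInter.2 fun i => lt_of_le_of_lt (hFmono (hXle i ω)) h
    -- independence and identical distribution
    have hprod : μ (⋂ i, X i ⁻¹' A) = (μ (X0 ⁻¹' A)) ^ n := by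
      have h1 := hindep.measure_inter_preimage_eq_mul Finset.univ
        (sets := fun _ => A) (fun i _ => hAmeas)
      have h2 : (⋂ i ∈ Finset.univ, X i ⁻¹' A) = ⋂ i, X i ⁻¹' A := by
        simp
      rw [h2] at h1
      rw [h1]
      have h3 : ∀ i : Fin n, μ (X i ⁻¹' A) = μ (X0 ⁻¹' A) := fun i =>
        (hident i).measure_mem_eq hAmeas
      rw [Finset.prod_congr rfl fun i _ => h3 i, Finset.prod_const,
        Finset.card_univ, Fintype.card_fin]
    -- chain
    have hchain : μ {ω | F (z ω) < 1 - ε} ≤ ENNReal.ofReal (Real.exp (-2 * n * ε ^ 2)) := by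
      calc μ {ω | F (z ω) < 1 - ε} ≤ μ (⋂ i, X i ⁻¹' A) := measure_mono hsubE
        _ = (μ (X0 ⁻¹' A)) ^ n := hprod
        _ ≤ (ENNReal.ofReal t) ^ n := pow_le_pow_left' hp n
        _ = ENNReal.ofReal (t ^ n) := (ENNReal.ofReal_pow ht0.le n).symm
        _ ≤ ENNReal.ofReal (Real.exp (-2 * n * ε ^ 2)) := by
            refine ENNReal.ofReal_le_ofReal ?_
            have hsingle : t ≤ Real.exp (-2 * ε ^ 2) :=
              one_sub_le_exp_neg_two_sq hε0 h1
            calc t ^ n ≤ (Real.exp (-2 * ε ^ 2)) ^ n :=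
                  pow_le_pow_left₀ ht0.le hsingle n
              _ = Real.exp (-2 * n * ε ^ 2) := by
                  rw [← Real.exp_nat_mul]
                  ring_nf
    calc (μ {ω | F (z ω) < 1 - ε}).toReal
        ≤ (ENNReal.ofReal (Real.exp (-2 * n * ε ^ 2))).toReal :=
          ENNReal.toReal_mono ENNReal.ofReal_ne_top hchain
      _ = Real.exp (-2 * n * ε ^ 2) := ENNReal.toReal_ofReal hexp_pos.le
end

section
/- Let x_1, x_2, ..., x_n be a real-valued independent and identically distributed random sample with common cumulative distribution function F, let z = max(x_1, ..., x_n), and let X be a further random variable with the same distribution, independent of the sample. Then for every ε ≥ √( (1/(2n)) · ln 2 ), one has Pr( Pr(X ≤ z | z) ≥ 1 − ε ) ≥ 1 − exp(−2 n ε²); equivalently, since Pr(X ≤ z | z) = F(z), the event that a fresh independent draw from the score distribution does not exceed the sample maximum has conditional probability at least 1 − ε, with probability at least 1 − exp(−2 n ε²) over the sample. -/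
/-!
If `F z < 1 - ε` then every sample point lies in `{x | F x < 1 - ε}`, a set of probability
at most `1 - ε`: by inner regularity it is exhausted by compact sets, each contained in some
`Iic x` with `F x < 1 - ε`. By independence the bad event has probability at most
`(1 - ε)ⁿ ≤ exp (-2 n ε²)`.
-/

open MeasureTheory ProbabilityTheory Real

theorem one_sub_le_exp_neg_two_mul_sq {ε : ℝ} (hε : 0 ≤ ε) : 1 - ε ≤ exp (-2 * ε ^ 2) := by
  rcases le_total 1 ε with hε₁ | hε₁
  · linarith [exp_pos (-2 * ε ^ 2)]
  have hpoly : 1 - ε ≤ (1 - ε ^ 2 / 2) ^ 4 := by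
    nlinarith [mul_nonneg hε (sub_nonneg.2 hε₁), pow_nonneg hε 3, sq_nonneg (ε - 4 / 5),
      mul_nonneg (mul_nonneg hε (sub_nonneg.2 hε₁)) (sq_nonneg (ε - 4 / 5)),
      mul_nonneg hε (sq_nonneg (ε ^ 2 - 4 / 5 * ε)),
      mul_nonneg (pow_nonneg hε 3) (sq_nonneg (ε - 4 / 5))]
  calc 1 - ε ≤ (1 - ε ^ 2 / 2) ^ 4 := hpoly
    _ ≤ exp (-(ε ^ 2 / 2)) ^ 4 := by
      gcongr
      · nlinarith
      · linarith [add_one_le_exp (-(ε ^ 2 / 2))]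
    _ = exp (-2 * ε ^ 2) := by rw [← exp_nat_mul]; ring_nf

theorem measure_cdf_lt_le (ν : Measure ℝ) [IsProbabilityMeasure ν] (t : ℝ) :
    ν {x | cdf ν x < t} ≤ ENNReal.ofReal t := by
  by_contra! hlt
  obtain ⟨K, hKS, hK, htK⟩ :=
    ((monotone_cdf ν).measurable measurableSet_Iio).exists_lt_isCompact hlt
  have hKne : K.Nonempty := Set.nonempty_iff_ne_empty.2 fun h ↦ by simp [h] at htK
  have hmax : sSup K ∈ K := hK.sSup_mem hKne
  have hKle : ν K ≤ ENNReal.ofReal t := calc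
    ν K ≤ ν (Set.Iic (sSup K)) := measure_mono fun x hx ↦ le_csSup hK.bddAbove hx
    _ = ENNReal.ofReal (cdf ν (sSup K)) := (ofReal_cdf ν _).symm
    _ ≤ ENNReal.ofReal t := ENNReal.ofReal_le_ofReal (hKS hmax).le
  exact htK.not_ge hKle

theorem setOf_lt_of_isGreatest_eq_iInter {Ω ι : Type*} {X : ι → Ω → ℝ} {z : Ω → ℝ}
    (hz : ∀ ω, IsGreatest (Set.range fun i ↦ X i ω) (z ω)) {g : ℝ → ℝ} (hg : Monotone g)
    (t : ℝ) : {ω | g (z ω) < t} = ⋂ i, X i ⁻¹' {x | g x < t} := by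
  ext ω
  simp only [Set.mem_ofPred_eq, Set.mem_iInter, Set.mem_preimage]
  refine ⟨fun h i ↦ (hg ((hz ω).2 ⟨i, rfl⟩)).trans_lt h, fun h ↦ ?_⟩
  obtain ⟨i, hi⟩ := (hz ω).1
  exact hi ▸ h i

theorem ProbabilityTheory.iIndepFun.measure_iInter_preimage_eq_pow {Ω ι : Type*}
    [MeasurableSpace Ω] {μ : Measure Ω} [Fintype ι] {X : ι → Ω → ℝ} (hindep : iIndepFun X μ)
    {X₀ : Ω → ℝ} (hident : ∀ i, IdentDistrib (X i) X₀ μ μ) {S : Set ℝ}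
    (hS : MeasurableSet S) :
    μ (⋂ i, X i ⁻¹' S) = μ (X₀ ⁻¹' S) ^ Fintype.card ι := by
  rw [hindep.meas_iInter fun i ↦ ⟨S, hS, rfl⟩]
  exact (Finset.prod_congr rfl fun i _ ↦ (hident i).measure_mem_eq hS).trans (Finset.prod_const _)

theorem fresh_draw_below_sample_max_general
    {Ω : Type*} [MeasurableSpace Ω] (μ : Measure Ω) [IsProbabilityMeasure μ]
    (n : ℕ) (hn : 0 < n) (X : Fin n → Ω → ℝ)
    (hmeas : ∀ i, Measurable (X i))
    (hindep : iIndepFun X μ)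
    (hident : ∀ i, IdentDistrib (X i) (X ⟨0, hn⟩) μ μ)
    (F : ℝ → ℝ) (hF : ∀ i x, F x = (μ {ω | X i ω ≤ x}).toReal)
    (z : Ω → ℝ) (hz : ∀ ω, IsGreatest (Set.range fun i => X i ω) (z ω))
    (ε : ℝ) (hε : Real.sqrt ((1 / (2 * n)) * Real.log 2) ≤ ε) :
    1 - Real.exp (-2 * n * ε ^ 2) ≤ (μ {ω | 1 - ε ≤ F (z ω)}).toReal := by
  set ν := μ.map (X ⟨0, hn⟩)
  have : IsProbabilityMeasure ν := Measure.isProbabilityMeasure_map (hmeas _).aemeasurable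
  have hFcdf : F = cdf ν := funext fun x ↦ by
    rw [cdf_eq_real, measureReal_def, hF ⟨0, hn⟩ x, Measure.map_apply (hmeas _) measurableSet_Iic]
    rfl
  have hS : MeasurableSet {x | cdf ν x < 1 - ε} := (monotone_cdf ν).measurable measurableSet_Iio
  have hbad_eq : {ω | F (z ω) < 1 - ε} = ⋂ i, X i ⁻¹' {x | cdf ν x < 1 - ε} := by
    rw [hFcdf]; exact setOf_lt_of_isGreatest_eq_iInter hz (monotone_cdf ν) _
  have hbad : μ {ω | F (z ω) < 1 - ε} ≤ ENNReal.ofReal (exp (-2 * n * ε ^ 2)) := calc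
    μ {ω | F (z ω) < 1 - ε} = ν {x | cdf ν x < 1 - ε} ^ n := by
      rw [hbad_eq, hindep.measure_iInter_preimage_eq_pow hident hS, Fintype.card_fin,
        Measure.map_apply (hmeas _) hS]
    _ ≤ ENNReal.ofReal (exp (-2 * ε ^ 2)) ^ n := by
      gcongr
      exact (measure_cdf_lt_le ν _).trans
        (ENNReal.ofReal_le_ofReal (one_sub_le_exp_neg_two_mul_sq ((sqrt_nonneg _).trans hε)))
    _ = ENNReal.ofReal (exp (-2 * n * ε ^ 2)) := by
      rw [← ENNReal.ofReal_pow (exp_pos _).le, ← exp_nat_mul]; ring_nf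
  have hgood : {ω | 1 - ε ≤ F (z ω)} = {ω | F (z ω) < 1 - ε}ᶜ := by ext; simp
  rw [hgood, ← measureReal_def,
    probReal_compl_eq_one_sub (hbad_eq ▸ .iInter fun i ↦ hmeas i hS)]
  linarith [ENNReal.toReal_le_of_le_ofReal (exp_pos _).le hbad,
    measureReal_def μ {ω | F (z ω) < 1 - ε}]

/-- For an i.i.d. real-valued sample `X 0, …, X (n-1)` with common CDF `F`, sample
maximum `z`, and a further independent draw `Y` from the same distribution, for every
`ε ≥ √((1/(2n)) · ln 2)` the event that a fresh draw does not exceed the sample maximum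
has conditional probability `Pr(Y ≤ z ∣ z) = F(z)` at least `1 − ε`, with probability
at least `1 − exp(−2nε²)` over the sample. -/
theorem fresh_draw_below_sample_max
    {Ω : Type*} [MeasurableSpace Ω] (μ : Measure Ω) [IsProbabilityMeasure μ]
    (n : ℕ) (hn : 0 < n) (X : Fin n → Ω → ℝ)
    (hmeas : ∀ i, Measurable (X i))
    (hindep : iIndepFun X μ)
    (hident : ∀ i, IdentDistrib (X i) (X ⟨0, hn⟩) μ μ)
    (Y : Ω → ℝ) (hYmeas : Measurable Y)
    (hYident : IdentDistrib Y (X ⟨0, hn⟩) μ μ)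
    (hYindep : IndepFun Y (fun ω => fun i => X i ω) μ)
    (F : ℝ → ℝ) (hF : ∀ i x, F x = (μ {ω | X i ω ≤ x}).toReal)
    (z : Ω → ℝ) (hz : ∀ ω, IsGreatest (Set.range fun i => X i ω) (z ω))
    (ε : ℝ) (hε : Real.sqrt ((1 / (2 * n)) * Real.log 2) ≤ ε) :
    1 - Real.exp (-2 * n * ε ^ 2) ≤ (μ {ω | 1 - ε ≤ F (z ω)}).toReal :=
  fresh_draw_below_sample_max_general μ n hn X hmeas hindep hident F hF z hz ε hε
end
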